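/- Fix M > 0. Then on the interval (√(8/9), 1) of values of E, the function ℓ_lb is strictly increasing with ℓ_lb(E) → 12M² as E → √(8/9)⁺ and ℓ_lb(E) → 16M² as E → 1⁻, and the function ℓ_ub is strictly increasing with ℓ_ub(E) → 12M² as E → √(8/9)⁺ and ℓ_ub(E) → +∞ as E → 1⁻. -/
import Mathlib


/-- `ℓ_lb(E) = 12M²/(1 - 4α - 8α² + 8α√(α² + α))` with `α = (9/8)E² - 1`. -/
noncomputable def llb (M E : ℝ) : ℝ :=
  12*M^2 / (1 - 4*(9/8*E^2-1) - 8*(9/8*E^2-1)^2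
    + 8*(9/8*E^2-1)*Real.sqrt ((9/8*E^2-1)^2 + (9/8*E^2-1)))

/-- `ℓ_ub(E) = 12M²/(1 - 4α - 8α² - 8α√(α² + α))` with `α = (9/8)E² - 1`. -/
noncomputable def lub (M E : ℝ) : ℝ :=
  12*M^2 / (1 - 4*(9/8*E^2-1) - 8*(9/8*E^2-1)^2
    - 8*(9/8*E^2-1)*Real.sqrt ((9/8*E^2-1)^2 + (9/8*E^2-1)))



namespace Stmt5Aux

noncomputable def Dp (a : ℝ) : ℝ := 1 - 4*a - 8*a^2 + 8*a*Real.sqrt (a^2+a)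
noncomputable def Dm (a : ℝ) : ℝ := 1 - 4*a - 8*a^2 - 8*a*Real.sqrt (a^2+a)

lemma sq_s {a : ℝ} (ha : 0 ≤ a) : (Real.sqrt (a^2+a))^2 = a^2+a :=
  Real.sq_sqrt (by positivity)

lemma Dm_anti {a b : ℝ} (ha : 0 ≤ a) (hab : a < b) : Dm b < Dm a := by
  have hsa := Real.sqrt_nonneg (a^2+a)
  have hsb := Real.sqrt_nonneg (b^2+b)
  have hb : 0 < b := lt_of_le_of_lt ha hab
  have hmono : Real.sqrt (a^2+a) ≤ Real.sqrt (b^2+b) :=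
    Real.sqrt_le_sqrt (by nlinarith)
  have h1 : a * Real.sqrt (a^2+a) ≤ b * Real.sqrt (b^2+b) :=
    mul_le_mul hab.le hmono hsa hb.le
  unfold Dm
  nlinarith

lemma Dp_anti {a b : ℝ} (ha : 0 < a) (hab : a < b) (hb : b ≤ 1/8) : Dp b < Dp a := by
  set sa := Real.sqrt (a^2+a) with hsa_def
  set sb := Real.sqrt (b^2+b) with hsb_def
  have hsa := Real.sqrt_nonneg (a^2+a)
  have hsb := Real.sqrt_nonneg (b^2+b)
  have hb0 : 0 < b := lt_trans ha hab
  have hsa2 : sa^2 = a^2+a := sq_s ha.le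
  have hsb2 : sb^2 = b^2+b := sq_s hb0.le
  have h3a : 3*a ≤ sa := by
    rw [hsa_def, Real.le_sqrt (by positivity) (by positivity)]
    nlinarith
  have h3b : 3*b ≤ sb := by
    rw [hsb_def, Real.le_sqrt (by positivity) (by positivity)]
    nlinarith
  have hsbpos : 0 < sb := lt_of_lt_of_le (by linarith) h3b
  have hden : 0 < b*sb + a*sa := by positivity
  have hgeb : 3*(a^2+b^2) ≤ b*sb + a*sa := by nlinarith
  have hcoef : 0 < 4*(b-a)+8*(b^2-a^2) := by nlinarith
  have key : (8*b*sb - 8*a*sa) * (b*sb + a*sa)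
      < (4*(b-a)+8*(b^2-a^2)) * (b*sb + a*sa) := by
    have expand : (8*b*sb - 8*a*sa) * (b*sb + a*sa) = 8*b^2*sb^2 - 8*a^2*sa^2 := by ring
    rw [expand, hsa2, hsb2]
    have hpoly : 8*b^2*(b^2+b) - 8*a^2*(a^2+a) < (4*(b-a)+8*(b^2-a^2)) * (3*(a^2+b^2)) := by
      nlinarith [mul_nonneg (sub_pos.2 hab).le (sq_nonneg (a-b)),
        pow_lt_pow_left₀ hab ha.le (by norm_num : (4:ℕ) ≠ 0)]
    calc 8*b^2*(b^2+b) - 8*a^2*(a^2+a)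
        < (4*(b-a)+8*(b^2-a^2)) * (3*(a^2+b^2)) := hpoly
      _ ≤ (4*(b-a)+8*(b^2-a^2)) * (b*sb + a*sa) :=
          mul_le_mul_of_nonneg_left hgeb hcoef.le
  have hfin : 8*b*sb - 8*a*sa < 4*(b-a)+8*(b^2-a^2) :=
    lt_of_mul_lt_mul_right key hden.le
  unfold Dp
  linarith

lemma prod_eq (a : ℝ) (ha : 0 ≤ a) : Dp a * Dm a = 1 - 8*a := by
  have h : (Real.sqrt (a^2+a))^2 = a^2+a := sq_s ha
  unfold Dp Dm
  linear_combination (-64*a^2) * h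

lemma sqrt964 : Real.sqrt ((1/8:ℝ)^2 + 1/8) = 3/8 := by
  rw [show ((1/8:ℝ)^2+1/8) = (3/8)^2 by norm_num]
  exact Real.sqrt_sq (by norm_num)

lemma Dm18 : Dm (1/8) = 0 := by
  unfold Dm; rw [sqrt964]; norm_num

lemma Dp18 : Dp (1/8) = 3/4 := by
  unfold Dp; rw [sqrt964]; norm_num

lemma Dm0 : Dm 0 = 1 := by unfold Dm; norm_num

lemma Dp0 : Dp 0 = 1 := by unfold Dp; norm_num

lemma Dm_pos {a : ℝ} (ha : 0 ≤ a) (h : a < 1/8) : 0 < Dm a := by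
  have := Dm_anti ha h
  rwa [Dm18] at this

lemma Dp_pos {a : ℝ} (ha : 0 ≤ a) (h : a < 1/8) : 0 < Dp a := by
  have hp := prod_eq a ha
  have hm := Dm_pos ha h
  nlinarith

lemma mem_bounds {E : ℝ} (h1 : Real.sqrt (8/9) < E) (h2 : E < 1) :
    0 < 9/8*E^2-1 ∧ 9/8*E^2-1 < 1/8 := by
  have h89 : (Real.sqrt (8/9))^2 = 8/9 := Real.sq_sqrt (by norm_num)
  have h0 : 0 ≤ Real.sqrt (8/9) := Real.sqrt_nonneg _
  have hE0 : 0 < E := lt_of_le_of_lt h0 h1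
  have hsq : (Real.sqrt (8/9))^2 < E^2 := pow_lt_pow_left₀ h1 h0 two_ne_zero
  constructor
  · nlinarith
  · nlinarith

lemma contDp : Continuous (fun E : ℝ => Dp (9/8*E^2-1)) := by
  unfold Dp; fun_prop

lemma contDm : Continuous (fun E : ℝ => Dm (9/8*E^2-1)) := by
  unfold Dm; fun_prop

end Stmt5Aux

open Real Filter Set Stmt5Aux in
theorem stmt5 (M : ℝ) (hM : 0 < M) :
    StrictMonoOn (llb M) (Set.Ioo (Real.sqrt (8/9)) 1) ∧
    Filter.Tendsto (llb M) (nhdsWithin (Real.sqrt (8/9)) (Set.Ioi (Real.sqrt (8/9))))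
      (nhds (12*M^2)) ∧
    Filter.Tendsto (llb M) (nhdsWithin 1 (Set.Iio 1)) (nhds (16*M^2)) ∧
    StrictMonoOn (lub M) (Set.Ioo (Real.sqrt (8/9)) 1) ∧
    Filter.Tendsto (lub M) (nhdsWithin (Real.sqrt (8/9)) (Set.Ioi (Real.sqrt (8/9))))
      (nhds (12*M^2)) ∧
    Filter.Tendsto (lub M) (nhdsWithin 1 (Set.Iio 1)) Filter.atTop := by
  have hllb : ∀ E : ℝ, llb M E = 12*M^2 / Dp (9/8*E^2-1) := fun E => rfl
  have hlub : ∀ E : ℝ, lub M E = 12*M^2 / Dm (9/8*E^2-1) := fun E => rfl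
  have h12 : (0:ℝ) < 12*M^2 := by positivity
  have hs89 : Real.sqrt (8/9) < 1 := by
    rw [show (1:ℝ) = Real.sqrt 1 from (Real.sqrt_one).symm]
    exact Real.sqrt_lt_sqrt (by norm_num) (by norm_num)
  have ha89 : 9/8*(Real.sqrt (8/9))^2 - 1 = 0 := by
    rw [Real.sq_sqrt (by norm_num : (0:ℝ) ≤ 8/9)]; ring
  have ha1 : 9/8*(1:ℝ)^2 - 1 = 1/8 := by norm_num
  -- monotonicity data
  have hmonodata : ∀ x ∈ Set.Ioo (Real.sqrt (8/9)) 1, ∀ y ∈ Set.Ioo (Real.sqrt (8/9)) 1,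
      x < y → 0 < 9/8*x^2-1 ∧ 9/8*x^2-1 < 9/8*y^2-1 ∧ 9/8*y^2-1 < 1/8 := by
    intro x hx y hy hxy
    obtain ⟨hax, _⟩ := mem_bounds hx.1 hx.2
    obtain ⟨_, hay⟩ := mem_bounds hy.1 hy.2
    have hx0 : 0 < x := lt_of_le_of_lt (Real.sqrt_nonneg _) hx.1
    have : x^2 < y^2 := pow_lt_pow_left₀ hxy hx0.le two_ne_zero
    exact ⟨hax, by linarith, hay⟩
  refine ⟨?_, ?_, ?_, ?_, ?_, ?_⟩
  · -- llb strict mono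
    intro x hx y hy hxy
    obtain ⟨h1, h2, h3⟩ := hmonodata x hx y hy hxy
    rw [hllb, hllb]
    exact div_lt_div_of_pos_left h12 (Dp_pos (by linarith) h3)
      (Dp_anti h1 h2 h3.le)
  · -- llb → 12M² at √(8/9)⁺
    have hcont : ContinuousAt (llb M) (Real.sqrt (8/9)) := by
      rw [show llb M = fun E => 12*M^2 / Dp (9/8*E^2-1) from rfl]
      exact ContinuousAt.div continuousAt_const contDp.continuousAt
        (by rw [ha89, Dp0]; norm_num)
    have hval : llb M (Real.sqrt (8/9)) = 12*M^2 := by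
      rw [hllb, ha89, Dp0, div_one]
    exact hval ▸ hcont.tendsto.mono_left nhdsWithin_le_nhds
  · -- llb → 16M² at 1⁻
    have hcont : ContinuousAt (llb M) 1 := by
      rw [show llb M = fun E => 12*M^2 / Dp (9/8*E^2-1) from rfl]
      exact ContinuousAt.div continuousAt_const contDp.continuousAt
        (by rw [ha1, Dp18]; norm_num)
    have hval : llb M 1 = 16*M^2 := by
      rw [hllb, ha1, Dp18]; ring
    exact hval ▸ hcont.tendsto.mono_left nhdsWithin_le_nhds
  · -- lub strict mono
    intro x hx y hy hxy
    obtain ⟨h1, h2, h3⟩ := hmonodata x hx y hy hxy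
    rw [hlub, hlub]
    exact div_lt_div_of_pos_left h12 (Dm_pos (by linarith) h3)
      (Dm_anti h1.le h2)
  · -- lub → 12M² at √(8/9)⁺
    have hcont : ContinuousAt (lub M) (Real.sqrt (8/9)) := by
      rw [show lub M = fun E => 12*M^2 / Dm (9/8*E^2-1) from rfl]
      exact ContinuousAt.div continuousAt_const contDm.continuousAt
        (by rw [ha89, Dm0]; norm_num)
    have hval : lub M (Real.sqrt (8/9)) = 12*M^2 := by
      rw [hlub, ha89, Dm0, div_one]
    exact hval ▸ hcont.tendsto.mono_left nhdsWithin_le_nhds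
  · -- lub → ∞ at 1⁻
    have hd : Tendsto (fun E : ℝ => Dm (9/8*E^2-1)) (nhdsWithin 1 (Set.Iio 1))
        (nhdsWithin 0 (Set.Ioi 0)) := by
      rw [tendsto_nhdsWithin_iff]
      constructor
      · have := contDm.continuousAt (x := 1)
        rw [ContinuousAt, ha1, Dm18] at this
        exact this.mono_left nhdsWithin_le_nhds
      · filter_upwards [Ioo_mem_nhdsLT_of_mem (⟨hs89, le_refl 1⟩ : (1:ℝ) ∈ Set.Ioc (Real.sqrt (8/9)) 1)]
          with E hE
        obtain ⟨h1, h2⟩ := mem_bounds hE.1 hE.2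
        exact Dm_pos h1.le h2
    have hinv : Tendsto (fun x : ℝ => 12*M^2 * x⁻¹) (nhdsWithin 0 (Set.Ioi 0)) atTop :=
      tendsto_inv_nhdsGT_zero.const_mul_atTop h12
    have := hinv.comp hd
    refine this.congr fun E => ?_
    simp only [Function.comp, hlub, div_eq_mul_inv]
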